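/- arXiv:2311.00148 — 5 statements merged into one kernel-verified Lean document; each statement's English description precedes it below -/
import Mathlib

section
/- Let R be a commutative ring and let λ, μ ∈ R be units. Then for all integers a ≥ 0 and n ≥ 0 one has W_μ^λ(a, n+1) = (μ + μ⁻¹)·W_μ^λ(a, n) + W_{λμ}^λ(a−1, n), where by convention W_μ^λ(−1, n) = 0. -/
open Finset

noncomputable section

/-- `inv(f⁻¹(s), f⁻¹(t))` : the number of pairs `(i, j)` with `i < j`,
`i ∈ f⁻¹(s)` and `j ∈ f⁻¹(t)`. -/
def invP {n : ℕ} (f : Fin n → Fin 3) (s t : Fin 3) : ℕ :=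
  ((Finset.univ : Finset (Fin n × Fin n)).filter
    (fun p => p.1 < p.2 ∧ f p.1 = s ∧ f p.2 = t)).card

/-- The cardinality of `f⁻¹(s)`. -/
def partSize {n : ℕ} (f : Fin n → Fin 3) (s : Fin 3) : ℕ :=
  (Finset.univ.filter (fun i => f i = s)).card

/-- `W_μ^λ(a, n)`: the sum over ordered partitions `{1,…,n} = E₀ ⊔ E ⊔ E₁` (encoded as
functions `f : Fin n → Fin 3`, with `E₀ = f⁻¹(0)`, `E = f⁻¹(1)`, `E₁ = f⁻¹(2)`) with
`|E| = a`, of `λ^(inv(E₀,E) - inv(E₁,E)) · μ^(|E₀| - |E₁|)`.  It vanishes if `a < 0`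
or `a > n`. -/
def W {R : Type*} [CommRing R] (lam mu : Rˣ) (a : ℤ) (n : ℕ) : R :=
  ∑ f ∈ (Finset.univ : Finset (Fin n → Fin 3)).filter (fun f => (partSize f 1 : ℤ) = a),
    ((lam ^ ((invP f 0 1 : ℤ) - (invP f 2 1 : ℤ)) *
      mu ^ ((partSize f 0 : ℤ) - (partSize f 2 : ℤ)) : Rˣ) : R)

/-!
Sort the partitions of `{1, …, n+1}` by the block containing `n+1`. In `E₀` or `E₁` it only
changes `|E₀| - |E₁|` by `±1`, giving the factor `μ^{±1}`. In `E` it adds `|E₀|` to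
`inv(E₀, E)` and `|E₁|` to `inv(E₁, E)`, so `λ^{|E₀| - |E₁|}` appears and is absorbed by replacing
`μ` with `λμ`.
-/

section

variable {n : ℕ}

lemma partSize_snoc (g : Fin n → Fin 3) (c s : Fin 3) :
    partSize (Fin.snoc g c) s = partSize g s + if c = s then 1 else 0 := by
  simp only [partSize, Finset.card_filter, Fin.sum_univ_castSucc, Fin.snoc_castSucc,
    Fin.snoc_last]

lemma invP_snoc (g : Fin n → Fin 3) (c s t : Fin 3) :
    invP (Fin.snoc g c) s t = invP g s t + if c = t then partSize g s else 0 := by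
  have last_row (j : Fin (n + 1)) :
      (if Fin.last n < j ∧ (Fin.snoc g c : Fin (n + 1) → Fin 3) (Fin.last n) = s ∧
        (Fin.snoc g c : Fin (n + 1) → Fin 3) j = t then 1 else 0) = 0 :=
    if_neg fun h => (Fin.le_last j).not_gt h.1
  have row (i : Fin n) : ∑ j : Fin (n + 1),
      (if Fin.castSucc i < j ∧ (Fin.snoc g c : Fin (n + 1) → Fin 3) (Fin.castSucc i) = s ∧
        (Fin.snoc g c : Fin (n + 1) → Fin 3) j = t then 1 else 0) =
      (∑ j : Fin n, if i < j ∧ g i = s ∧ g j = t then 1 else 0) +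
        if g i = s ∧ c = t then 1 else 0 := by
    rw [Fin.sum_univ_castSucc]
    congr 1
    · simp [Fin.snoc_castSucc]
    · simp [Fin.snoc_castSucc, Fin.castSucc_lt_last]
  simp only [invP, partSize, Finset.card_filter, Fintype.sum_prod_type]
  rw [Fin.sum_univ_castSucc]
  simp only [last_row, Finset.sum_const_zero, add_zero, row, Finset.sum_add_distrib]
  by_cases hc : c = t <;> simp [hc]

variable {R : Type*} [CommRing R]

def weight (lam mu : Rˣ) (f : Fin n → Fin 3) : Rˣ :=
  lam ^ ((invP f 0 1 : ℤ) - (invP f 2 1 : ℤ)) * mu ^ ((partSize f 0 : ℤ) - (partSize f 2 : ℤ))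

lemma W_eq_sum_ite (lam mu : Rˣ) (a : ℤ) (n : ℕ) :
    W lam mu a n =
      ∑ f : Fin n → Fin 3, if (partSize f 1 : ℤ) = a then (weight lam mu f : R) else 0 :=
  Finset.sum_filter _ _

lemma weight_snoc_zero (lam mu : Rˣ) (g : Fin n → Fin 3) :
    weight lam mu (Fin.snoc g 0) = mu * weight lam mu g := by
  simp only [weight, invP_snoc, partSize_snoc, Fin.isValue, Fin.reduceEq, ↓reduceIte, add_zero,
    Nat.cast_add, Nat.cast_one]
  rw [add_sub_right_comm, zpow_add_one, mul_comm _ mu, mul_left_comm]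

lemma weight_snoc_one (lam mu : Rˣ) (g : Fin n → Fin 3) :
    weight lam mu (Fin.snoc g 1) = weight lam (lam * mu) g := by
  simp only [weight, invP_snoc, partSize_snoc, Fin.isValue, Fin.reduceEq, ↓reduceIte, add_zero,
    Nat.cast_add]
  rw [mul_zpow, add_sub_add_comm, zpow_add, mul_assoc]

lemma weight_snoc_two (lam mu : Rˣ) (g : Fin n → Fin 3) :
    weight lam mu (Fin.snoc g 2) = mu⁻¹ * weight lam mu g := by
  simp only [weight, invP_snoc, partSize_snoc, Fin.isValue, Fin.reduceEq, ↓reduceIte, add_zero,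
    Nat.cast_add, Nat.cast_one]
  rw [sub_add_eq_sub_sub, zpow_sub_one, mul_comm _ mu⁻¹, mul_left_comm]

lemma sum_fun_fin_succ_eq_sum_snoc {α M : Type*} [Fintype α] [AddCommMonoid M]
    (F : (Fin (n + 1) → α) → M) :
    ∑ f, F f = ∑ g : Fin n → α, ∑ c, F (Fin.snoc g c) := by
  rw [← (Fin.snocEquiv fun _ => α).sum_comp, Fintype.sum_prod_type, Finset.sum_comm]
  rfl

end

theorem stmt0_general {R : Type*} [CommRing R] (lam mu : Rˣ) (a : ℤ) (n : ℕ) :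
    W lam mu a (n + 1) =
      ((mu : R) + ((mu⁻¹ : Rˣ) : R)) * W lam mu a n + W lam (lam * mu) (a - 1) n := by
  simp only [W_eq_sum_ite, sum_fun_fin_succ_eq_sum_snoc, Fin.sum_univ_three, weight_snoc_zero, weight_snoc_one,
    weight_snoc_two, partSize_snoc, Fin.isValue, Fin.reduceEq, ↓reduceIte, add_zero,
    Finset.mul_sum, ← Finset.sum_add_distrib]
  refine Finset.sum_congr rfl fun g _ => ?_
  have shift : ((partSize g 1 + 1 : ℕ) : ℤ) = a ↔ (partSize g 1 : ℤ) = a - 1 := by omega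
  rw [if_congr shift rfl rfl]
  split_ifs <;> push_cast <;> ring

/-- For a commutative ring `R`, units `λ, μ ∈ Rˣ` and integers `a ≥ 0`, `n ≥ 0`,
`W_μ^λ(a, n+1) = (μ + μ⁻¹)·W_μ^λ(a, n) + W_{λμ}^λ(a−1, n)`. -/
theorem stmt0 {R : Type*} [CommRing R] (lam mu : Rˣ) (a : ℤ) (ha : 0 ≤ a) (n : ℕ) :
    W lam mu a (n + 1) =
      ((mu : R) + ((mu⁻¹ : Rˣ) : R)) * W lam mu a n + W lam (lam * mu) (a - 1) n :=
  stmt0_general lam mu a n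
end
end

section
/- For all integers a, b ≥ 0, the identity Σ_{c=0}^{min(a,b)} (λ; λ²)_c · [a+b choose 2c, a−c, b−c]_λ · λ^{(a−c)(b−c)} = [a+b choose a]_{λ²} holds in ℚ(λ). -/
noncomputable section

/-- The field `ℚ(λ)` of rational functions. -/
abbrev K : Type := RatFunc ℚ

/-- The indeterminate `λ`. -/
def Xq : K := RatFunc.X

/-- `(n)_t = ∏_{i=1}^n (t^i − 1)`. -/
def qfact (t : K) (n : ℕ) : K := ∏ i ∈ Finset.range n, (t ^ (i + 1) - 1)

/-- `(x; y)_n = ∏_{i=1}^n (1 − x·y^{i−1})`. -/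
def qpoch (x y : K) (n : ℕ) : K := ∏ i ∈ Finset.range n, (1 - x * y ^ i)

/-- The Gaussian binomial `[n choose m]_t` (with value `0` out of range). -/
def qbinomN (t : K) (n m : ℕ) : K :=
  if m ≤ n then qfact t n / (qfact t m * qfact t (n - m)) else 0

/-- The `t`-multinomial `[m₁+m₂+m₃ choose m₁, m₂, m₃]_t`. -/
def qmul3 (t : K) (m1 m2 m3 : ℕ) : K :=
  qfact t (m1 + m2 + m3) / (qfact t m1 * qfact t m2 * qfact t m3)


/-!
Both sides satisfy `S (a+1) (b+1) = S a (b+1) + λ^(2(a+1)) S (a+1) b` with `S 0 b = S a 0 = 1`: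
for the right-hand side this is the `q`-Pascal rule with `q = λ²`. For the left-hand side, with
summand `F(a,b,c)`, the recurrence holds summand by summand up to a telescoping difference (a
Wilf–Zeilberger pair) with certificate `F(a,b,c) λ^(a-c) (λ^(2c) - 1) / (λ^(a+b) - 1)`, which
vanishes at `c = 0`. The argument only needs `λ` to have infinite multiplicative order, so that
no `λ`-factorial vanishes.
-/

open Finset

variable {t : K}

lemma pow_sub_one_ne_zero (ht : ¬IsOfFinOrder t) {k : ℕ} (hk : k ≠ 0) : t ^ k - 1 ≠ 0 :=
  sub_ne_zero.mpr fun h => ht (isOfFinOrder_iff_pow_eq_one.mpr ⟨k, Nat.pos_of_ne_zero hk, h⟩)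

lemma not_isOfFinOrder_Xq : ¬IsOfFinOrder Xq := by
  rw [isOfFinOrder_iff_pow_eq_one]
  rintro ⟨n, hn, h⟩
  apply RatFunc.algebraMap_ne_zero (Polynomial.X_pow_sub_C_ne_zero hn (1 : ℚ))
  rw [map_sub, map_pow, RatFunc.algebraMap_X, Polynomial.C_1, map_one, ← Xq, h, sub_self]

lemma qfact_zero (t : K) : qfact t 0 = 1 := prod_range_zero _

lemma qfact_succ (t : K) (n : ℕ) : qfact t (n + 1) = qfact t n * (t ^ (n + 1) - 1) :=
  prod_range_succ _ _

lemma qfact_ne_zero (ht : ¬IsOfFinOrder t) (n : ℕ) : qfact t n ≠ 0 :=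
  prod_ne_zero_iff.mpr fun i _ => pow_sub_one_ne_zero ht i.succ_ne_zero

lemma qpoch_succ (x y : K) (n : ℕ) : qpoch x y (n + 1) = qpoch x y n * (1 - x * y ^ n) :=
  prod_range_succ _ _

lemma qbinomN_zero_right (ht : ¬IsOfFinOrder t) (n : ℕ) : qbinomN t n 0 = 1 := by
  simp [qbinomN, qfact_zero, qfact_ne_zero ht]

lemma qbinomN_self (ht : ¬IsOfFinOrder t) (n : ℕ) : qbinomN t n n = 1 := by
  simp [qbinomN, qfact_zero, qfact_ne_zero ht]

lemma qbinomN_succ_succ (ht : ¬IsOfFinOrder t) (a b : ℕ) :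
    qbinomN t (a + b + 1 + 1) (a + 1)
      = qbinomN t (a + b + 1) a + t ^ (a + 1) * qbinomN t (a + b + 1) (a + 1) := by
  simp only [qbinomN, if_pos (show a ≤ a + b + 1 by omega),
    if_pos (show a + 1 ≤ a + b + 1 by omega), if_pos (show a + 1 ≤ a + b + 1 + 1 by omega),
    show a + b + 1 - a = b + 1 by omega, show a + b + 1 - (a + 1) = b by omega,
    show a + b + 1 + 1 - (a + 1) = b + 1 by omega, qfact_succ]
  have := qfact_ne_zero ht a
  have := qfact_ne_zero ht b
  have := qfact_ne_zero ht (a + b + 1)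
  have := pow_sub_one_ne_zero ht (k := a + 1) (by omega)
  have := pow_sub_one_ne_zero ht (k := b + 1) (by omega)
  have := pow_sub_one_ne_zero ht (k := a + b + 1 + 1) (by omega)
  field_simp
  ring

/-- The summand of the left-hand side at `c`, in the coordinates `x = a - c`, `y = b - c`. -/
def summand (t : K) (c x y : ℕ) : K :=
  qpoch t (t ^ 2) c * qmul3 t (2 * c) x y * t ^ (x * y)

def certificate (t : K) (c x y : ℕ) : K :=
  summand t c x y * t ^ x * (t ^ (2 * c) - 1) / (t ^ (2 * c + x + y) - 1)

def lhsSum (t : K) (a b : ℕ) : K :=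
  ∑ c ∈ range (min a b + 1), summand t c (a - c) (b - c)

lemma summand_telescope (ht : ¬IsOfFinOrder t) (c x y : ℕ) :
    summand t c (x + 1) (y + 1) - summand t c x (y + 1)
        - t ^ (2 * (c + x + 1)) * summand t c (x + 1) y
      = certificate t c (x + 1) (y + 1) - certificate t (c + 1) x y := by
  simp only [certificate, summand, qmul3, qfact_succ, qpoch_succ, ← pow_mul,
    show 2 * c + (x + 1) + (y + 1) = 2 * c + x + y + 1 + 1 by ring,
    show 2 * c + x + (y + 1) = 2 * c + x + y + 1 by ring,
    show 2 * c + (x + 1) + y = 2 * c + x + y + 1 by ring,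
    show 2 * c + 1 + 1 + x + y = 2 * c + x + y + 1 + 1 by ring,
    show 2 * (c + 1) = 2 * c + 1 + 1 by ring]
  have := qfact_ne_zero ht (2 * c)
  have := qfact_ne_zero ht x
  have := qfact_ne_zero ht y
  have := qfact_ne_zero ht (2 * c + x + y)
  have := pow_sub_one_ne_zero ht (k := 2 * c + x + y + 1 + 1) (by omega)
  have := pow_sub_one_ne_zero ht (k := x + 1) (by omega)
  have := pow_sub_one_ne_zero ht (k := y + 1) (by omega)
  have := pow_sub_one_ne_zero ht (k := 2 * c + 1) (by omega)
  have := pow_sub_one_ne_zero ht (k := 2 * c + 1 + 1) (by omega)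
  have := pow_sub_one_ne_zero ht (k := 2 * c + x + y + 1) (by omega)
  field_simp
  ring

/- The next three lemmas are `summand_telescope` at the top of the range of summation, where
the summands with `x = -1` or `y = -1` are absent. -/

lemma summand_telescope_left (ht : ¬IsOfFinOrder t) (c y : ℕ) :
    summand t c 0 (y + 1) - t ^ (2 * c) * summand t c 0 y = certificate t c 0 (y + 1) := by
  simp only [certificate, summand, qmul3, add_zero, ← add_assoc, qfact_succ, qfact_zero]
  have := qfact_ne_zero ht (2 * c)
  have := qfact_ne_zero ht y
  have := qfact_ne_zero ht (2 * c + y)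
  have := pow_sub_one_ne_zero ht (k := y + 1) (by omega)
  have := pow_sub_one_ne_zero ht (k := 2 * c + y + 1) (by omega)
  field_simp
  ring

lemma summand_telescope_right (ht : ¬IsOfFinOrder t) (c x : ℕ) :
    summand t c (x + 1) 0 - summand t c x 0 = certificate t c (x + 1) 0 := by
  simp only [certificate, summand, qmul3, add_zero, ← add_assoc, qfact_succ, qfact_zero]
  have := qfact_ne_zero ht (2 * c)
  have := qfact_ne_zero ht x
  have := qfact_ne_zero ht (2 * c + x)
  have := pow_sub_one_ne_zero ht (k := x + 1) (by omega)
  have := pow_sub_one_ne_zero ht (k := 2 * c + x + 1) (by omega)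
  field_simp
  ring

lemma summand_eq_certificate (ht : ¬IsOfFinOrder t) {c : ℕ} (hc : c ≠ 0) :
    summand t c 0 0 = certificate t c 0 0 := by
  simp only [certificate, summand, qmul3, add_zero, qfact_zero]
  have := qfact_ne_zero ht (2 * c)
  have := pow_sub_one_ne_zero ht (k := 2 * c) (by omega)
  field_simp

lemma sum_summand_recurrence (ht : ¬IsOfFinOrder t) (a b : ℕ) :
    ∑ c ∈ range (min a b + 1), summand t c (a + 1 - c) (b + 1 - c)
        - ∑ c ∈ range (min a b + 1), summand t c (a - c) (b + 1 - c)
        - t ^ (2 * (a + 1)) * ∑ c ∈ range (min a b + 1), summand t c (a + 1 - c) (b - c)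
      = -certificate t (min a b + 1) (a - min a b) (b - min a b) := by
  set f : ℕ → K := fun c => certificate t c (a + 1 - c) (b + 1 - c)
  have hstep : ∀ c ∈ range (min a b + 1), summand t c (a + 1 - c) (b + 1 - c)
      - summand t c (a - c) (b + 1 - c) - t ^ (2 * (a + 1)) * summand t c (a + 1 - c) (b - c)
      = f c - f (c + 1) := by
    intro c hc
    obtain ⟨x, rfl⟩ : ∃ x, a = c + x := ⟨a - c, by grind⟩
    obtain ⟨y, rfl⟩ : ∃ y, b = c + y := ⟨b - c, by grind⟩
    simp only [f, Nat.add_sub_add_right, show ∀ z, c + z + 1 - c = z + 1 by omega,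
      Nat.add_sub_cancel_left]
    exact summand_telescope ht c x y
  rw [mul_sum, ← sum_sub_distrib, ← sum_sub_distrib, sum_congr rfl hstep, sum_range_sub']
  simp [f, certificate]

lemma lhsSum_succ_succ (ht : ¬IsOfFinOrder t) (a b : ℕ) :
    lhsSum t (a + 1) (b + 1) = lhsSum t a (b + 1) + t ^ (2 * (a + 1)) * lhsSum t (a + 1) b := by
  have htel := sum_summand_recurrence ht a b
  have hpeel : lhsSum t (a + 1) (b + 1)
      = ∑ c ∈ range (min a b + 1), summand t c (a + 1 - c) (b + 1 - c)
        + summand t (min a b + 1) (a - min a b) (b - min a b) := by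
    rw [lhsSum, show min (a + 1) (b + 1) = min a b + 1 by omega, sum_range_succ,
      Nat.add_sub_add_right, Nat.add_sub_add_right]
  rcases lt_trichotomy a b with h | rfl | h
  · obtain ⟨y, rfl⟩ : ∃ y, b = a + y + 1 := ⟨b - a - 1, by omega⟩
    rw [show min a (a + y + 1) = a by omega] at htel hpeel
    rw [hpeel, lhsSum, lhsSum, show min a (a + y + 1 + 1) = a by omega,
      show min (a + 1) (a + y + 1) = a + 1 by omega, sum_range_succ _ (a + 1)]
    simp only [Nat.sub_self, show a + y + 1 - a = y + 1 by omega,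
      show a + y + 1 - (a + 1) = y by omega] at htel ⊢
    linear_combination htel + summand_telescope_left ht (a + 1) y
  · rw [min_self] at htel hpeel
    rw [hpeel, lhsSum, lhsSum, show min a (a + 1) = a by omega, show min (a + 1) a = a by omega]
    simp only [Nat.sub_self] at htel ⊢
    linear_combination htel + summand_eq_certificate ht a.succ_ne_zero
  · obtain ⟨x, rfl⟩ : ∃ x, a = b + x + 1 := ⟨a - b - 1, by omega⟩
    rw [show min (b + x + 1) b = b by omega] at htel hpeel
    rw [hpeel, lhsSum, lhsSum, show min (b + x + 1) (b + 1) = b + 1 by omega,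
      show min (b + x + 1 + 1) b = b by omega, sum_range_succ _ (b + 1)]
    simp only [Nat.sub_self, show b + x + 1 - b = x + 1 by omega,
      show b + x + 1 - (b + 1) = x by omega] at htel ⊢
    linear_combination htel + summand_telescope_right ht (b + 1) x

lemma lhsSum_zero_left (ht : ¬IsOfFinOrder t) (b : ℕ) : lhsSum t 0 b = 1 := by
  simp [lhsSum, summand, qmul3, qfact_zero, qpoch, qfact_ne_zero ht]

lemma lhsSum_zero_right (ht : ¬IsOfFinOrder t) (a : ℕ) : lhsSum t a 0 = 1 := by
  simp [lhsSum, summand, qmul3, qfact_zero, qpoch, qfact_ne_zero ht]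

theorem lhsSum_eq_qbinomN (ht : ¬IsOfFinOrder t) (a b : ℕ) :
    lhsSum t a b = qbinomN (t ^ 2) (a + b) a := by
  have ht2 : ¬IsOfFinOrder (t ^ 2) := by simp [isOfFinOrder_pow, ht]
  induction a generalizing b with
  | zero => rw [lhsSum_zero_left ht, qbinomN_zero_right ht2]
  | succ a iha =>
    induction b with
    | zero => rw [lhsSum_zero_right ht, add_zero, qbinomN_self ht2]
    | succ b ihb =>
      rw [lhsSum_succ_succ ht, iha, ihb, pow_mul, show a + 1 + (b + 1) = a + b + 1 + 1 by omega,
        show a + (b + 1) = a + b + 1 by omega, add_right_comm a 1 b, qbinomN_succ_succ ht2]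

/-- For integers `a, b ≥ 0`,
`Σ_{c=0}^{min(a,b)} (λ; λ²)_c · [a+b choose 2c, a−c, b−c]_λ · λ^{(a−c)(b−c)}
  = [a+b choose a]_{λ²}` in `ℚ(λ)`. -/
theorem stmt2 (a b : ℕ) :
    ∑ c ∈ Finset.range (min a b + 1),
      qpoch Xq (Xq ^ 2) c * qmul3 Xq (2 * c) (a - c) (b - c) * Xq ^ ((a - c) * (b - c))
    = qbinomN (Xq ^ 2) (a + b) a :=
  lhsSum_eq_qbinomN not_isOfFinOrder_Xq a b
end
end

section
/- Let q be a prime power, V a 2n-dimensional vector space over 𝔽_q equipped with a nondegenerate alternating bilinear form, and L ⊆ V a fixed Lagrangian subspace. Then the number of Lagrangian subspaces I of V with I ∩ L = 0 equals q^{n(n+1)/2}. -/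
/-!
Fix a complement `W` of `L`. The complements of `L` are exactly the graphs `{x + φ x | x ∈ W}` of
linear maps `φ : W → L`, and such a graph is Lagrangian iff the form `C x y = B y (φ x)` on `W`
satisfies `C - Cᵀ = B|_W`. As `B` pairs `L` perfectly with `W`, `φ ↦ C` is a bijection from
`Hom(W, L)` onto the bilinear forms on `W`; and since `B|_W` is alternating, the solutions of
`C - Cᵀ = B|_W` form a nonempty coset of the symmetric forms, of which there are `q^(n(n+1)/2)`.
-/

open Module Submodule Matrix
open LinearMap (BilinForm)

namespace Matrix

variable {ι R : Type*}

theorem card_isSymm [Fintype ι] [DecidableEq ι] [Fintype R] :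
    Nat.card {M : Matrix ι ι R // M.IsSymm} =
      Fintype.card R ^ (Fintype.card ι * (Fintype.card ι + 1) / 2) := by
  have e : {M : Matrix ι ι R // M.IsSymm} ≃ (Sym2 ι → R) :=
    (Equiv.subtypeEquivRight fun M => by rw [IsSymm.ext_iff, forall_comm]).trans Sym2.lift
  rw [Nat.card_congr e, Nat.card_eq_fintype_card, Fintype.card_fun, Sym2.card,
    Nat.choose_two_right, Nat.add_sub_cancel, Nat.mul_comm]

theorem exists_sub_transpose_eq [LinearOrder ι] [AddCommGroup R] {A : Matrix ι ι R}
    (hA : Aᵀ = -A) (hdiag : ∀ i, A i i = 0) : ∃ M : Matrix ι ι R, M - Mᵀ = A := by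
  refine ⟨of fun i j => if i < j then A i j else 0, ?_⟩
  ext i j
  have hji : A j i = -A i j := by rw [← transpose_apply A, hA, neg_apply]
  rcases lt_trichotomy i j with h | rfl | h
  · simp [h, h.not_gt]
  · simp [hdiag]
  · simp [h, h.not_gt, hji]

theorem card_sub_transpose_eq [Fintype ι] [DecidableEq ι] [AddCommGroup R] [Fintype R]
    {A : Matrix ι ι R} (hA : Aᵀ = -A) (hdiag : ∀ i, A i i = 0) :
    Nat.card {M : Matrix ι ι R // M - Mᵀ = A} =
      Fintype.card R ^ (Fintype.card ι * (Fintype.card ι + 1) / 2) := by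
  let := LinearOrder.lift' _ (Fintype.equivFin ι).injective
  obtain ⟨M₀, rfl⟩ := exists_sub_transpose_eq hA hdiag
  refine (Nat.card_congr (Equiv.subtypeEquiv (Equiv.subRight M₀) fun M => ?_)).trans card_isSymm
  simp only [Equiv.subRight_apply, IsSymm, transpose_sub, sub_eq_sub_iff_sub_eq_sub, eq_comm]

end Matrix

namespace Submodule

variable {R V : Type*} [Ring R] [AddCommGroup V] [Module R V] {W L : Submodule R V}

def graphIn (φ : W →ₗ[R] L) : Submodule R V :=
  LinearMap.range (W.subtype + L.subtype ∘ₗ φ)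

theorem add_mem_graphIn_iff (h : Disjoint W L) (φ : W →ₗ[R] L) (x : W) (l : L) :
    (x : V) + l ∈ graphIn φ ↔ l = φ x := by
  constructor
  · rintro ⟨y, hy⟩
    replace hy : (y : V) + φ y = x + l := hy
    have hyx : y - x = 0 := by
      refine eq_zero_of_coe_mem_of_disjoint h ?_
      have : ((y - x : W) : V) = l - φ y := by
        rw [AddSubgroupClass.coe_sub, sub_eq_sub_iff_add_eq_add, hy, add_comm]
      rw [this]
      exact sub_mem l.2 (φ y).2
    rw [sub_eq_zero] at hyx
    subst hyx
    exact Subtype.ext (add_left_cancel hy).symm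
  · rintro rfl
    exact ⟨x, rfl⟩

theorem isCompl_graphIn (h : IsCompl W L) (φ : W →ₗ[R] L) : IsCompl (graphIn φ) L := by
  constructor
  · refine disjoint_def.mpr fun v hv hvL => ?_
    have := (add_mem_graphIn_iff h.disjoint φ 0 ⟨v, hvL⟩).mp (by simpa using hv)
    simpa using congrArg Subtype.val this
  · rw [codisjoint_iff, eq_top_iff, ← h.sup_eq_top, sup_le_iff]
    refine ⟨fun x hx => ?_, le_sup_right⟩
    have hgraph : x + φ ⟨x, hx⟩ ∈ graphIn φ := ⟨⟨x, hx⟩, rfl⟩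
    simpa using sub_mem (mem_sup_left hgraph) (mem_sup_right (φ ⟨x, hx⟩).2)

theorem graphIn_injective (h : Disjoint W L) :
    Function.Injective (graphIn : (W →ₗ[R] L) → Submodule R V) := by
  intro φ ψ hφψ
  ext x
  have hx : (x : V) + φ x ∈ graphIn ψ := hφψ ▸ ⟨x, rfl⟩
  rw [add_mem_graphIn_iff h] at hx
  rw [hx]

theorem exists_graphIn_eq (h : IsCompl W L) {I : Submodule R V} (hI : IsCompl I L) :
    ∃ φ : W →ₗ[R] L, graphIn φ = I := by
  let π := L.projectionOnto I hI.symm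
  refine ⟨-(π ∘ₗ W.subtype), ext fun v => ?_⟩
  obtain ⟨x, l, rfl, -⟩ := existsUnique_add_of_isCompl h v
  rw [add_mem_graphIn_iff h.disjoint, ← projectionOnto_apply_eq_zero_iff hI.symm, map_add,
    projectionOnto_apply_left, LinearMap.neg_apply, eq_neg_iff_add_eq_zero, add_comm]
  rfl

noncomputable def graphInEquiv (h : IsCompl W L) :
    (W →ₗ[R] L) ≃ {I : Submodule R V // IsCompl I L} :=
  Equiv.ofBijective (fun φ => ⟨graphIn φ, isCompl_graphIn h φ⟩)
    ⟨fun _ _ hφψ => graphIn_injective h.disjoint (congrArg Subtype.val hφψ),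
      fun I => (exists_graphIn_eq h I.2).imp fun _ hφ => Subtype.ext hφ⟩

end Submodule

namespace LinearMap.BilinForm

section Counting

variable {F M : Type*} [Field F] [AddCommGroup M] [Module F M]

theorem toMatrix_flip {R ι : Type*} [CommSemiring R] [Module R M] [Fintype ι] [DecidableEq ι]
    (b : Basis ι R M) (C : BilinForm R M) : toMatrix b C.flip = (toMatrix b C)ᵀ := by
  ext i j
  simp

theorem card_sub_flip_eq [Fintype F] [FiniteDimensional F M] {β : BilinForm F M}
    (hβ : β.IsAlt) :
    Nat.card {C : BilinForm F M // C - C.flip = β} =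
      Fintype.card F ^ (finrank F M * (finrank F M + 1) / 2) := by
  let E := toMatrix (finBasis F M)
  have hA : (E β)ᵀ = -E β := by
    ext i j
    exact (LinearMap.IsAlt.neg hβ _ _).symm
  rw [Nat.card_congr (Equiv.subtypeEquiv E.toEquiv fun C => ?_),
    Matrix.card_sub_transpose_eq hA (fun i => hβ _), Fintype.card_fin]
  simp only [LinearEquiv.coe_toEquiv, E, ← toMatrix_flip, ← map_sub,
    EmbeddingLike.apply_eq_iff_eq]

end Counting

section CommRing

variable {R V : Type*} [CommRing R] [AddCommGroup V] [Module R V] {B : BilinForm R V}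
  {I W L : Submodule R V}

theorem orthogonal_eq_self_iff_forall (hB : B.IsRefl) :
    B.orthogonal I = I ↔ ∀ v, v ∈ I ↔ ∀ w ∈ I, B v w = 0 := by
  refine SetLike.ext_iff.trans (forall_congr' fun v => ?_)
  rw [mem_orthogonal_iff, @iff_comm (v ∈ I)]
  exact iff_congr (forall₂_congr fun w _ => ⟨hB w v, hB v w⟩) Iff.rfl

theorem graphIn_le_orthogonal_iff (hB : B.IsAlt) (hL : L ≤ B.orthogonal L) (φ : W →ₗ[R] L) :
    graphIn φ ≤ B.orthogonal (graphIn φ) ↔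
      (B.compl₁₂ W.subtype L.subtype).flip ∘ₗ φ -
          ((B.compl₁₂ W.subtype L.subtype).flip ∘ₗ φ).flip = B.compl₁₂ W.subtype W.subtype := by
  have hgraph : graphIn φ ≤ B.orthogonal (graphIn φ) ↔
      ∀ x y : W, B (x + φ x) (y + φ y) = 0 :=
    ⟨fun h x y => h ⟨y, rfl⟩ _ ⟨x, rfl⟩, by rintro h _ ⟨y, rfl⟩ _ ⟨x, rfl⟩; exact h x y⟩
  rw [hgraph, LinearMap.ext_iff₂]
  refine forall₂_congr fun x y => ?_
  have hφφ : B (φ x) (φ y) = 0 := hL (φ y).2 _ (φ x).2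
  have hskew : B (φ x) y = -B y (φ x) := (LinearMap.IsAlt.neg hB _ _).symm
  simp only [map_add, LinearMap.add_apply, LinearMap.sub_apply, coe_comp, Function.comp_apply,
    LinearMap.flip_apply, compl₁₂_apply, subtype_apply]
  constructor <;> intro h <;> linear_combination -h + hφφ + hskew

theorem injective_flip_compl₁₂_subtype (hB : B.Nondegenerate) (hL : B.orthogonal L = L)
    (hWL : IsCompl W L) : Function.Injective (B.compl₁₂ W.subtype L.subtype).flip := by
  refine (injective_iff_map_eq_zero _).mpr fun l hl => Subtype.ext (hB.2 l fun v => ?_)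
  obtain ⟨w, l', rfl, -⟩ := existsUnique_add_of_isCompl hWL v
  have hw : B w l = 0 := LinearMap.congr_fun hl w
  have hl' : B l' l = 0 := hL.ge l.2 l' l'.2
  simp [hw, hl']

end CommRing

variable {F V : Type*} [Field F] [AddCommGroup V] [Module F V] {B : BilinForm F V}
  {I W L : Submodule F V} [FiniteDimensional F V]

theorem two_mul_finrank_of_orthogonal_eq_self (hB : B.Nondegenerate)
    (hI : B.orthogonal I = I) : 2 * finrank F I = finrank F V := by
  have h := finrank_orthogonal hB I
  rw [hI] at h
  have := I.finrank_le
  omega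

theorem orthogonal_eq_self_iff_le (hB : B.Nondegenerate) (hI : 2 * finrank F I = finrank F V) :
    B.orthogonal I = I ↔ I ≤ B.orthogonal I := by
  refine ⟨fun h => h.ge, fun h => (eq_of_le_of_finrank_le h ?_).symm⟩
  rw [finrank_orthogonal hB]
  omega

theorem orthogonal_eq_self_and_disjoint_iff (hB : B.Nondegenerate) (hL : B.orthogonal L = L) :
    B.orthogonal I = I ∧ Disjoint I L ↔ IsCompl I L ∧ I ≤ B.orthogonal I := by
  have hdimL := two_mul_finrank_of_orthogonal_eq_self hB hL
  constructor
  · rintro ⟨hI, hIL⟩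
    have hdimI := two_mul_finrank_of_orthogonal_eq_self hB hI
    exact ⟨(isCompl_iff_disjoint I L (by omega)).mpr hIL, hI.ge⟩
  · rintro ⟨hIL, hI⟩
    have := finrank_add_eq_of_isCompl hIL
    exact ⟨(orthogonal_eq_self_iff_le hB (by omega)).mpr hI, hIL.disjoint⟩

noncomputable def dualEquivOfIsCompl (hB : B.Nondegenerate) (hL : B.orthogonal L = L)
    (hWL : IsCompl W L) : L ≃ₗ[F] Module.Dual F W :=
  linearEquivOfInjective _ (injective_flip_compl₁₂_subtype hB hL hWL) (by
    have := finrank_add_eq_of_isCompl hWL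
    have := two_mul_finrank_of_orthogonal_eq_self hB hL
    rw [finrank_linearMap_self]
    omega)

end LinearMap.BilinForm

open LinearMap.BilinForm

/-- Let `F = 𝔽_q` be a finite field (`q = Fintype.card F` a prime power), `V` a
`2n`-dimensional `F`-vector space with a nondegenerate alternating bilinear form `B`,
and `L ⊆ V` a Lagrangian (`L = L^⊥`, expressed pointwise: `v ∈ L ↔ ∀ w ∈ L, B v w = 0`).
Then the number of Lagrangians `I` with `I ∩ L = 0` equals `q^{n(n+1)/2}`. -/
theorem stmt8 {F V : Type*} [Field F] [Fintype F] [AddCommGroup V] [Module F V]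
    [FiniteDimensional F V] (n : ℕ) (hdim : Module.finrank F V = 2 * n)
    (B : V →ₗ[F] V →ₗ[F] F)
    (halt : ∀ v, B v v = 0)
    (hnd : ∀ v, (∀ w, B v w = 0) → v = 0)
    (L : Submodule F V) (hL : ∀ v, v ∈ L ↔ ∀ w ∈ L, B v w = 0) :
    Nat.card {I : Submodule F V // (∀ v, v ∈ I ↔ ∀ w ∈ I, B v w = 0) ∧ I ⊓ L = ⊥}
      = Fintype.card F ^ (n * (n + 1) / 2) := by
  have hrefl : B.IsRefl := LinearMap.IsAlt.isRefl halt
  have hB : B.Nondegenerate := hrefl.nondegenerate_iff_separatingLeft.mpr hnd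
  have hL' : orthogonal B L = L := (orthogonal_eq_self_iff_forall hrefl).mpr hL
  obtain ⟨W, hLW⟩ := L.exists_isCompl
  have hW : finrank F W = n := by
    have := finrank_add_eq_of_isCompl hLW
    have := two_mul_finrank_of_orthogonal_eq_self hB hL'
    omega
  calc Nat.card {I : Submodule F V // (∀ v, v ∈ I ↔ ∀ w ∈ I, B v w = 0) ∧ I ⊓ L = ⊥}
      = Nat.card {I : Submodule F V // IsCompl I L ∧ I ≤ orthogonal B I} :=
        Nat.card_congr <| Equiv.subtypeEquivRight fun I => by
          rw [← orthogonal_eq_self_iff_forall hrefl, ← disjoint_iff,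
            orthogonal_eq_self_and_disjoint_iff hB hL']
    _ = Nat.card {φ : W →ₗ[F] L // graphIn φ ≤ orthogonal B (graphIn φ)} :=
        Nat.card_congr (((graphInEquiv hLW.symm).subtypeEquiv fun _ => Iff.rfl).trans
          (Equiv.subtypeSubtypeEquivSubtypeInter _ _)).symm
    _ = Nat.card {C : BilinForm F W // C - C.flip = B.compl₁₂ W.subtype W.subtype} :=
        Nat.card_congr <| (LinearEquiv.congrRight (dualEquivOfIsCompl hB hL' hLW.symm)).toEquiv
          |>.subtypeEquiv (graphIn_le_orthogonal_iff halt hL'.ge)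
    _ = Fintype.card F ^ (n * (n + 1) / 2) := by
        rw [card_sub_flip_eq (β := B.compl₁₂ W.subtype W.subtype) fun x => halt x, hW]
end

section
/- Let q be an odd prime power, V a 2n-dimensional vector space over 𝔽_q equipped with a nondegenerate symmetric bilinear form that admits a Lagrangian subspace, and L ⊆ V a fixed Lagrangian. Then the number of Lagrangian subspaces I of V with I ∩ L = 0 equals q^{n(n−1)/2}. -/
/-!
Fix a complement `C` of `L`. The complements of `L` are exactly the graphs `{c - g c | c ∈ C}`
of linear maps `g : C → L`, and by counting dimensions a Lagrangian `I` with `I ∩ L = 0` is such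
a complement. As `L` is Lagrangian, `B` identifies `L` with the dual of `C`, so `g` amounts to
the bilinear form `β c c' = B (g c) c'` on `C`, and the graph of `g` is Lagrangian iff
`β + βᵀ = B|_C`. When `2 ≠ 0`, the solutions of `β + βᵀ = S` are parametrised by the
`n(n-1)/2` entries of `β` above the diagonal.
-/

open Module
open scoped Matrix
open LinearMap (BilinForm)

namespace Matrix

variable {ι K : Type*} [Fintype ι] [LinearOrder ι] [Field K] [Fintype K]

theorem card_add_transpose_eq (h2 : (2 : K) ≠ 0) {S : Matrix ι ι K} (hS : S.IsSymm) :
    Nat.card {M : Matrix ι ι K // M + Mᵀ = S} = Fintype.card K ^ (Fintype.card ι).choose 2 := by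
  have entrywise : ∀ M : Matrix ι ι K, M + Mᵀ = S ↔ ∀ i j, M i j + M j i = S i j := fun M => by
    simp [← Matrix.ext_iff]
  let upper (M : {M : Matrix ι ι K // M + Mᵀ = S}) : {p : ι × ι // p.1 < p.2} → K :=
    fun p => M.1 p.1.1 p.1.2
  have injective : upper.Injective := by
    rintro ⟨M, hM⟩ ⟨M', hM'⟩ h
    rw [entrywise] at hM hM'
    ext i j
    rcases lt_trichotomy i j with hij | rfl | hij
    · exact congrFun h ⟨(i, j), hij⟩
    · exact mul_left_cancel₀ h2 (by linear_combination hM i i - hM' i i)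
    · linear_combination hM j i - hM' j i - congrFun h ⟨(j, i), hij⟩
  have surjective : upper.Surjective := by
    intro g
    let M : Matrix ι ι K := Matrix.of fun i j =>
      if h : i < j then g ⟨(i, j), h⟩ else if h' : j < i then S i j - g ⟨(j, i), h'⟩
      else S i j / 2
    refine ⟨⟨M, (entrywise M).2 fun i j => ?_⟩, funext fun p => by simp [upper, M, p.2]⟩
    rcases lt_trichotomy i j with hij | rfl | hij
    · simp [M, hij, hij.not_gt, hS.apply]
    · simp only [M, of_apply, lt_irrefl, dite_false]
      field_simp
      ring
    · simp [M, hij, hij.not_gt]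
  rw [Nat.card_congr (Equiv.ofBijective upper ⟨injective, surjective⟩), Nat.card_fun,
    Nat.card_eq_fintype_card, Nat.card_eq_fintype_card, Fintype.card_subtype,
    Fintype.card_product_filter_lt]

end Matrix

namespace Submodule

variable {R E : Type*} [Ring R] [AddCommGroup E] [Module R E] {L C : Submodule R E}

/-- A complement `I` of `L` goes to the restriction to `C` of the projection onto `L` along `I`. -/
noncomputable def isComplEquivLinearMap (h : IsCompl L C) : {I // IsCompl L I} ≃ (C →ₗ[R] L) :=
  L.isComplEquivProj.trans
    { toFun := fun π => π.1 ∘ₗ C.subtype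
      invFun := fun g => ⟨LinearMap.ofIsCompl h LinearMap.id g, by simp⟩
      left_inv := fun π => Subtype.ext <| LinearMap.ofIsCompl_eq' h (by ext; simp [π.2]) rfl
      right_inv := fun g => by ext; simp }

theorem coe_isComplEquivLinearMap_symm_apply (h : IsCompl L C) (g : C →ₗ[R] L) :
    ((isComplEquivLinearMap h).symm g : Submodule R E) =
      LinearMap.range (C.subtype - L.subtype ∘ₗ g) := by
  apply le_antisymm
  · intro v hv
    obtain ⟨l, c, rfl, -⟩ := existsUnique_add_of_isCompl h v
    have hl : l = -g c := by simpa [isComplEquivLinearMap, add_eq_zero_iff_eq_neg] using hv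
    exact ⟨c, by simp [hl, sub_eq_neg_add]⟩
  · rintro - ⟨c, rfl⟩
    simp [isComplEquivLinearMap]

end Submodule

namespace LinearMap.BilinForm

variable {K V : Type*} [Field K] [AddCommGroup V] [Module K V]

theorem card_add_flip_eq [Fintype K] [FiniteDimensional K V] (h2 : (2 : K) ≠ 0)
    {γ : BilinForm K V} (hγ : γ.IsSymm) :
    Nat.card {β : BilinForm K V // β + β.flip = γ} = Fintype.card K ^ (finrank K V).choose 2 := by
  let b := Module.finBasis K V
  have toMatrix_flip (β : BilinForm K V) : toMatrix b β.flip = (toMatrix b β)ᵀ := by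
    ext i j
    simp [toMatrix_apply]
  have e : {β : BilinForm K V // β + β.flip = γ} ≃ {M // M + Mᵀ = toMatrix b γ} :=
    (toMatrix b).toEquiv.subtypeEquiv fun β => by
      rw [LinearEquiv.coe_toEquiv, ← toMatrix_flip, ← map_add, (toMatrix b).injective.eq_iff]
  rw [Nat.card_congr e, Matrix.card_add_transpose_eq h2 ((isSymm_toMatrix_iff_isSymm b).mpr hγ),
    Fintype.card_fin]

def IsLagrangian (B : BilinForm K V) (I : Submodule K V) : Prop :=
  ∀ v, v ∈ I ↔ ∀ w ∈ I, B v w = 0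

variable {B : BilinForm K V} {I L : Submodule K V}

theorem isLagrangian_iff_orthogonal_eq (hB : B.IsRefl) :
    B.IsLagrangian I ↔ B.orthogonal I = I := by
  simp only [IsLagrangian, SetLike.ext_iff, mem_orthogonal_iff, hB.eq_iff]
  exact forall_congr' fun v => Iff.comm

variable {C : Submodule K V}

theorem injective_compl₁₂_of_isCompl (hnd : B.Nondegenerate)
    (hL : ∀ x ∈ L, ∀ y ∈ L, B x y = 0) (h : IsCompl L C) :
    Function.Injective (B.compl₁₂ L.subtype C.subtype) := by
  refine (injective_iff_map_eq_zero _).2 fun l hl => Subtype.ext <| hnd.1 l fun v => ?_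
  obtain ⟨l', c, rfl, -⟩ := Submodule.existsUnique_add_of_isCompl h v
  simpa [hL l l.2 l' l'.2] using LinearMap.congr_fun hl c

variable [FiniteDimensional K V]

theorem IsLagrangian.two_mul_finrank (hB : B.IsRefl) (hnd : B.Nondegenerate)
    (hI : B.IsLagrangian I) : 2 * finrank K I = finrank K V := by
  have h := finrank_orthogonal hnd I
  rw [(isLagrangian_iff_orthogonal_eq hB).1 hI] at h
  have := I.finrank_le
  omega

theorem isLagrangian_iff_isotropic (hB : B.IsRefl) (hnd : B.Nondegenerate)
    (hdim : 2 * finrank K I = finrank K V) :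
    B.IsLagrangian I ↔ ∀ v ∈ I, ∀ w ∈ I, B v w = 0 := by
  refine ⟨fun hI v hv => (hI v).1 hv, fun hiso => ?_⟩
  rw [isLagrangian_iff_orthogonal_eq hB]
  refine (Submodule.eq_of_le_of_finrank_le (fun v hv => ?_) ?_).symm
  · exact (mem_orthogonal_iff).2 fun w hw => hiso w hw v hv
  · rw [finrank_orthogonal hnd]
    omega

theorem IsLagrangian.isCompl_of_inf_eq_bot (hB : B.IsRefl) (hnd : B.Nondegenerate)
    (hI : B.IsLagrangian I) (hL : B.IsLagrangian L) (h : I ⊓ L = ⊥) : IsCompl L I := by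
  have := hL.two_mul_finrank hB hnd
  have := hI.two_mul_finrank hB hnd
  exact (Submodule.isCompl_iff_disjoint L I (by omega)).2 (disjoint_iff.2 (inf_comm I L ▸ h))


theorem isLagrangian_range_sub_iff (hB : B.IsSymm) (hnd : B.Nondegenerate)
    (hL : B.IsLagrangian L) (h : IsCompl L C) (g : C →ₗ[K] L) :
    B.IsLagrangian (LinearMap.range (C.subtype - L.subtype ∘ₗ g)) ↔
      B.compl₁₂ L.subtype C.subtype ∘ₗ g + (B.compl₁₂ L.subtype C.subtype ∘ₗ g).flip =
        B.restrict C := by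
  have hcompl := ((Submodule.isComplEquivLinearMap h).symm g).2
  rw [Submodule.coe_isComplEquivLinearMap_symm_apply] at hcompl
  have hdim : 2 * finrank K (LinearMap.range (C.subtype - L.subtype ∘ₗ g)) = finrank K V := by
    have := hL.two_mul_finrank hB.isRefl hnd
    have := Submodule.finrank_add_eq_of_isCompl hcompl
    omega
  rw [isLagrangian_iff_isotropic hB.isRefl hnd hdim, LinearMap.BilinForm.ext_iff]
  simp only [LinearMap.mem_range, forall_exists_index, forall_apply_eq_imp_iff]
  refine forall₂_congr fun c c' => ?_
  have hgg := (hL (g c)).1 (g c).2 (g c') (g c').2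
  simp only [LinearMap.sub_apply, LinearMap.comp_apply, map_sub, LinearMap.add_apply,
    LinearMap.flip_apply, LinearMap.compl₁₂_apply, restrict_apply, LinearMap.domRestrict_apply,
    Submodule.coe_subtype, hgg, hB.eq (c : V) (g c')]
  constructor <;> intro h <;> linear_combination -h

theorem card_isLagrangian_inf_eq_bot (hB : B.IsSymm) (hnd : B.Nondegenerate)
    (hL : B.IsLagrangian L) (h : IsCompl L C) :
    Nat.card {I // B.IsLagrangian I ∧ I ⊓ L = ⊥} =
      Nat.card {β : BilinForm K C // β + β.flip = B.restrict C} := by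
  have hdim : finrank K L = finrank K (C →ₗ[K] K) := by
    have := hL.two_mul_finrank hB.isRefl hnd
    have := Submodule.finrank_add_eq_of_isCompl h
    rw [finrank_linearMap_self]
    omega
  let toDual := (B.compl₁₂ L.subtype C.subtype).linearEquivOfInjective
    (injective_compl₁₂_of_isCompl hnd (fun x hx => (hL x).1 hx) h) hdim
  let Φ := (Submodule.isComplEquivLinearMap h).trans (LinearEquiv.congrRight toDual).toEquiv
  have hΦ (I : {I // IsCompl L I}) :
      B.IsLagrangian I ↔ Φ I + (Φ I).flip = B.restrict C := by
    obtain ⟨g, rfl⟩ := (Submodule.isComplEquivLinearMap h).symm.surjective I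
    rw [Submodule.coe_isComplEquivLinearMap_symm_apply, isLagrangian_range_sub_iff hB hnd hL h g]
    have : LinearEquiv.congrRight toDual g = B.compl₁₂ L.subtype C.subtype ∘ₗ g :=
      LinearMap.ext fun _ => rfl
    simp [Φ, this]
  calc Nat.card {I // B.IsLagrangian I ∧ I ⊓ L = ⊥}
      = Nat.card {I : {I // IsCompl L I} // B.IsLagrangian I} :=
        Nat.card_congr ((Equiv.subtypeEquivRight fun I =>
          ⟨fun hI => ⟨hI.1.isCompl_of_inf_eq_bot hB.isRefl hnd hL hI.2, hI.1⟩,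
            fun hI => ⟨hI.2, inf_comm I L ▸ hI.1.inf_eq_bot⟩⟩).trans
          (Equiv.subtypeSubtypeEquivSubtypeInter _ _).symm)
    _ = Nat.card {β : BilinForm K C // β + β.flip = B.restrict C} :=
        Nat.card_congr (Φ.subtypeEquiv hΦ)

end LinearMap.BilinForm

/-- Let `F = 𝔽_q` be a finite field of odd order, `V` a `2n`-dimensional `F`-vector
space with a nondegenerate symmetric bilinear form `B` admitting a Lagrangian, and
`L ⊆ V` a fixed Lagrangian (`L = L^⊥`, expressed pointwise).  Then the number of
Lagrangians `I` with `I ∩ L = 0` equals `q^{n(n−1)/2}`. -/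
theorem stmt9 {F V : Type*} [Field F] [Fintype F] (hodd : Odd (Fintype.card F))
    [AddCommGroup V] [Module F V]
    [FiniteDimensional F V] (n : ℕ) (hdim : Module.finrank F V = 2 * n)
    (B : V →ₗ[F] V →ₗ[F] F)
    (hsym : ∀ v w, B v w = B w v)
    (hnd : ∀ v, (∀ w, B v w = 0) → v = 0)
    (L : Submodule F V) (hL : ∀ v, v ∈ L ↔ ∀ w ∈ L, B v w = 0) :
    Nat.card {I : Submodule F V // (∀ v, v ∈ I ↔ ∀ w ∈ I, B v w = 0) ∧ I ⊓ L = ⊥}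
      = Fintype.card F ^ (n * (n - 1) / 2) := by
  have h2 : (2 : F) ≠ 0 := Ring.two_ne_zero fun h => by
    have := FiniteField.even_card_iff_char_two.1 h
    rw [Nat.odd_iff] at hodd
    omega
  have hB : BilinForm.IsSymm B := ⟨hsym⟩
  have hnd' : B.Nondegenerate := hB.isRefl.nondegenerate_iff_separatingLeft.2 hnd
  obtain ⟨C, hLC⟩ := L.exists_isCompl
  have hC : finrank F C = n := by
    have := BilinForm.IsLagrangian.two_mul_finrank hB.isRefl hnd' hL
    have := Submodule.finrank_add_eq_of_isCompl hLC
    omega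
  refine (BilinForm.card_isLagrangian_inf_eq_bot hB hnd' hL hLC).trans ?_
  rw [BilinForm.card_add_flip_eq h2 (hB.restrict C), hC, Nat.choose_two_right]
end

section
/- Let O be a discrete valuation ring with fraction field F, and let V be a finite-dimensional F-vector space with a direct sum decomposition V = V₁ ⊕ V₂. Then the map Λ ↦ (Λ ∩ V₁, pr₁(Λ), Λ ∩ V₂, pr₂(Λ), φ_Λ) is a bijection from the set of O-lattices of V to the set of tuples (L₁⁻, L₁⁺, L₂⁻, L₂⁺, φ) where L₁⁻ ⊆ L₁⁺ are O-lattices of V₁, L₂⁻ ⊆ L₂⁺ are O-lattices of V₂, and φ : L₁⁺/L₁⁻ → L₂⁺/L₂⁻ is an O-module isomorphism. Here pr_i : V → V_i are the projections, and φ_Λ is characterized by: φ_Λ(x + (Λ∩V₁)) = y + (Λ∩V₂) if and only if x + y ∈ Λ (x ∈ pr₁(Λ), y ∈ pr₂(Λ)); the inverse sends (L₁⁻, L₁⁺, L₂⁻, L₂⁺, φ) to {x + y : x ∈ L₁⁺, y ∈ L₂⁺, φ(x + L₁⁻) = y + L₂⁻}. -/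
/-- `L` is an `O`-lattice of the `F`-subspace `W` of `V`: it is a finitely generated
`O`-submodule contained in `W` whose `F`-span is `W`. -/
def IsLatticeOf (O : Type*) {F V : Type*} [CommRing O] [Field F] [Algebra O F]
    [AddCommGroup V] [Module F V] [Module O V] [IsScalarTower O F V]
    (W : Submodule F V) (L : Submodule O V) : Prop :=
  L.FG ∧ L ≤ W.restrictScalars O ∧ Submodule.span F (L : Set V) = W

/-- The data `(L₁⁻, L₁⁺, L₂⁻, L₂⁺, φ)`: lattices `L₁⁻ ⊆ L₁⁺` of `V₁`, lattices
`L₂⁻ ⊆ L₂⁺` of `V₂`, and an `O`-module isomorphism `φ : L₁⁺/L₁⁻ ≃ L₂⁺/L₂⁻`. -/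
structure LatTuple (O : Type*) {F V : Type*} [CommRing O] [Field F] [Algebra O F]
    [AddCommGroup V] [Module F V] [Module O V] [IsScalarTower O F V]
    (V₁ V₂ : Submodule F V) where
  L1m : Submodule O V
  L1p : Submodule O V
  L2m : Submodule O V
  L2p : Submodule O V
  h1m : IsLatticeOf O V₁ L1m
  h1p : IsLatticeOf O V₁ L1p
  h2m : IsLatticeOf O V₂ L2m
  h2p : IsLatticeOf O V₂ L2p
  hle1 : L1m ≤ L1p
  hle2 : L2m ≤ L2p
  phi : (↥L1p ⧸ Submodule.comap L1p.subtype L1m) ≃ₗ[O]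
        (↥L2p ⧸ Submodule.comap L2p.subtype L2m)

set_option linter.unusedSectionVars false

namespace Stmt15Aux

variable {O F V : Type*} [CommRing O] [IsDomain O] [IsDiscreteValuationRing O]
  [Field F] [Algebra O F] [IsFractionRing O F]
  [AddCommGroup V] [Module F V] [Module O V] [IsScalarTower O F V]

theorem fg_of_le {N L : Submodule O V} (hN : N.FG) (h : L ≤ N) : L.FG := by
  haveI := isNoetherian_of_fg_of_noetherian N hN
  have h1 : (Submodule.comap N.subtype L).FG := IsNoetherian.noetherian _
  have h2 : Submodule.map N.subtype (Submodule.comap N.subtype L) = L := by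
    rw [Submodule.map_comap_subtype, inf_eq_right.2 h]
  exact h2 ▸ h1.map _

theorem exists_smul_mem (L : Submodule O V) {v : V}
    (hv : v ∈ Submodule.span F (L : Set V)) : ∃ a : O, a ≠ 0 ∧ a • v ∈ L := by
  induction hv using Submodule.span_induction with
  | mem w hw => exact ⟨1, one_ne_zero, by simpa using hw⟩
  | zero => exact ⟨1, one_ne_zero, by simp⟩
  | add w u hw hu ihw ihu =>
    obtain ⟨a, ha, haL⟩ := ihw; obtain ⟨b, hb, hbL⟩ := ihu
    refine ⟨a * b, mul_ne_zero ha hb, ?_⟩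
    have : (a * b) • (w + u) = b • (a • w) + a • (b • u) := by
      rw [smul_add, smul_smul, smul_smul, mul_comm b a]
    rw [this]; exact L.add_mem (L.smul_mem _ haL) (L.smul_mem _ hbL)
  | smul c w hw ih =>
    obtain ⟨a, ha, haL⟩ := ih
    obtain ⟨n, d, hd, hcd⟩ := IsFractionRing.div_surjective (A := O) c
    have hd0 : d ≠ 0 := nonZeroDivisors.ne_zero hd
    refine ⟨d * a, mul_ne_zero hd0 ha, ?_⟩
    have key : (d * a) • (c • w) = (n * a) • w := by
      rw [← algebraMap_smul F (d * a), ← algebraMap_smul F (n * a), map_mul, map_mul,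
        smul_smul]
      congr 1
      have hdF : (algebraMap O F) d ≠ 0 :=
        IsFractionRing.to_map_ne_zero_of_mem_nonZeroDivisors hd
      field_simp [← hcd]
      rw [← hcd]; field_simp
    rw [key, mul_smul]
    exact L.smul_mem _ haL

theorem span_inf (Λ : Submodule O V) (W : Submodule F V)
    (hs : Submodule.span F (Λ : Set V) = ⊤) :
    Submodule.span F ((Λ ⊓ W.restrictScalars O : Submodule O V) : Set V) = W := by
  apply le_antisymm
  · rw [Submodule.span_le]; intro x hx; exact hx.2
  · intro v hv
    have hv' : v ∈ Submodule.span F (Λ : Set V) := by rw [hs]; trivial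
    obtain ⟨a, ha, haL⟩ := exists_smul_mem Λ hv'
    have ha' : algebraMap O F a ≠ 0 :=
      (map_ne_zero_iff _ (IsFractionRing.injective O F)).2 ha
    have hW : a • v ∈ W := by
      rw [← algebraMap_smul F a v]; exact W.smul_mem _ hv
    have hmem : a • v ∈ (Λ ⊓ W.restrictScalars O : Submodule O V) := ⟨haL, hW⟩
    have hveq : v = (algebraMap O F a)⁻¹ • (a • v) := by
      rw [← algebraMap_smul F a v, smul_smul, inv_mul_cancel₀ ha', one_smul]
    rw [hveq]
    exact Submodule.smul_mem _ _ (Submodule.subset_span hmem)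

section Proj

variable {V₁ V₂ : Submodule F V}

/-- The projection onto `V₁` along `V₂`, as an `O`-linear endomorphism of `V`. -/
noncomputable def pr (hc : IsCompl V₁ V₂) : V →ₗ[O] V :=
  (V₁.subtype ∘ₗ V₁.linearProjOfIsCompl V₂ hc).restrictScalars O

variable (hc : IsCompl V₁ V₂)

theorem pr_mem (v : V) : pr (O := O) hc v ∈ V₁ := (V₁.linearProjOfIsCompl V₂ hc v).2

theorem pr_add (v : V) : pr (O := O) hc v + pr (O := O) hc.symm v = v :=
  by have := Submodule.projection_add_projection_eq_self hc v; exact this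

theorem pr_left {v : V} (hv : v ∈ V₁) : pr (O := O) hc v = v :=
  congrArg (Submodule.subtype V₁) (Submodule.linearProjOfIsCompl_apply_left hc ⟨v, hv⟩)

theorem pr_right {v : V} (hv : v ∈ V₂) : pr (O := O) hc v = 0 :=
  congrArg (Submodule.subtype V₁) (Submodule.linearProjOfIsCompl_apply_right hc ⟨v, hv⟩)

end Proj

section Phi

variable {V₁ V₂ : Submodule F V} (hc : IsCompl V₁ V₂) (Λ : Submodule O V)

/-- Image of `Λ` under the projection onto `V₁`. -/
noncomputable abbrev Lp : Submodule O V := Submodule.map (pr (O := O) hc) Λ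

/-- `Λ ⊓ V₁` viewed inside `Lp`. -/
noncomputable abbrev N1 : Submodule O ↥(Lp hc Λ) :=
  Submodule.comap (Lp hc Λ).subtype (Λ ⊓ V₁.restrictScalars O)

noncomputable abbrev Q1 := ↥(Lp hc Λ) ⧸ N1 hc Λ

noncomputable def q1 : ↥Λ →ₗ[O] ↥(Lp hc Λ) :=
  (pr (O := O) hc).restrict fun _ hx => Submodule.mem_map_of_mem hx

theorem q1_apply (l : ↥Λ) : (q1 hc Λ l : V) = pr (O := O) hc (l : V) := rfl

noncomputable def f2 : ↥Λ →ₗ[O] Q1 hc.symm Λ :=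
  (N1 hc.symm Λ).mkQ ∘ₗ q1 hc.symm Λ

theorem f2_apply (l : ↥Λ) :
    f2 hc Λ l = Submodule.Quotient.mk (q1 hc.symm Λ l) := rfl

theorem hker : LinearMap.ker (q1 hc Λ) ≤ LinearMap.ker (f2 hc Λ) := by
  intro l hl
  have hl' : pr (O := O) hc (l : V) = 0 := congrArg Subtype.val hl
  have h2 : pr (O := O) hc.symm (l : V) = (l : V) := by
    have := pr_add (O := O) hc (l : V); rw [hl', zero_add] at this; exact this
  have hmem : q1 hc.symm Λ l ∈ N1 hc.symm Λ := by
    rw [Submodule.mem_comap, Submodule.subtype_apply, Submodule.mem_inf]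
    constructor
    · show pr (O := O) hc.symm (l : V) ∈ Λ
      rw [h2]
      exact l.2
    · exact pr_mem (O := O) hc.symm (l : V)
  rw [LinearMap.mem_ker, f2_apply, Submodule.Quotient.mk_eq_zero]
  exact hmem

theorem q1_surj : Function.Surjective (q1 hc Λ) := by
  rintro ⟨x, l, hl, rfl⟩
  exact ⟨⟨l, hl⟩, rfl⟩

noncomputable def phi0 : ↥(Lp hc Λ) →ₗ[O] Q1 hc.symm Λ :=
  ((LinearMap.ker (q1 hc Λ)).liftQ (f2 hc Λ) (hker hc Λ)) ∘ₗ
    ((q1 hc Λ).quotKerEquivOfSurjective (q1_surj hc Λ)).symm.toLinearMap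

theorem phi0_apply (l : V) (hl : l ∈ Λ) (h1 : pr (O := O) hc l ∈ Lp hc Λ)
    (h2 : pr (O := O) hc.symm l ∈ Lp hc.symm Λ) :
    phi0 hc Λ ⟨pr (O := O) hc l, h1⟩ =
      Submodule.Quotient.mk ⟨pr (O := O) hc.symm l, h2⟩ := by
  have hq : (⟨pr (O := O) hc l, h1⟩ : ↥(Lp hc Λ)) = q1 hc Λ ⟨l, hl⟩ := rfl
  have hsymm : ((q1 hc Λ).quotKerEquivOfSurjective (q1_surj hc Λ)).symm
      (q1 hc Λ ⟨l, hl⟩) = Submodule.Quotient.mk ⟨l, hl⟩ := by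
    rw [LinearEquiv.symm_apply_eq]
    rfl
  rw [phi0, LinearMap.comp_apply, LinearEquiv.coe_coe, hq, hsymm]
  rfl

theorem phi0_zero : N1 hc Λ ≤ LinearMap.ker (phi0 hc Λ) := by
  intro z hz
  rw [Submodule.mem_comap, Submodule.subtype_apply, Submodule.mem_inf] at hz
  have hzΛ : (z : V) ∈ Λ := hz.1
  have hzV₁ : (z : V) ∈ V₁ := hz.2
  have hpr : pr (O := O) hc (z : V) = (z : V) := pr_left (O := O) hc hzV₁
  have h1 : pr (O := O) hc (z : V) ∈ Lp hc Λ := by rw [hpr]; exact z.2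
  have h2 : pr (O := O) hc.symm (z : V) ∈ Lp hc.symm Λ := ⟨(z : V), hzΛ, rfl⟩
  have hzeq : z = ⟨pr (O := O) hc (z : V), h1⟩ := Subtype.ext hpr.symm
  rw [LinearMap.mem_ker, hzeq, phi0_apply hc Λ (z : V) hzΛ h1 h2,
    Submodule.Quotient.mk_eq_zero, Submodule.mem_comap, Submodule.subtype_apply,
    Submodule.mem_inf]
  have h0 : pr (O := O) hc.symm (z : V) = 0 := pr_right (O := O) hc.symm hzV₁
  refine ⟨?_, ?_⟩
  · show pr (O := O) hc.symm (z : V) ∈ Λ; rw [h0]; exact Λ.zero_mem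
  · exact pr_mem (O := O) hc.symm (z : V)

noncomputable def phiL : Q1 hc Λ →ₗ[O] Q1 hc.symm Λ :=
  (N1 hc Λ).liftQ (phi0 hc Λ) (phi0_zero hc Λ)

theorem phiL_char (x y : V) (hx : x ∈ Lp hc Λ) (hy : y ∈ Lp hc.symm Λ) :
    phiL hc Λ (Submodule.Quotient.mk ⟨x, hx⟩) = Submodule.Quotient.mk ⟨y, hy⟩ ↔
      x + y ∈ Λ := by
  obtain ⟨l, hl, rfl⟩ := hx
  have hyV₂ : y ∈ V₂ := by
    obtain ⟨m, _, rfl⟩ := hy; exact pr_mem (O := O) hc.symm m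
  have h2 : pr (O := O) hc.symm l ∈ Lp hc.symm Λ := ⟨l, hl, rfl⟩
  simp only [phiL, Submodule.liftQ_apply, phi0_apply hc Λ l hl ⟨l, hl, rfl⟩ h2]
  rw [Submodule.Quotient.eq, Submodule.mem_comap, Submodule.subtype_apply,
    Submodule.coe_sub, Submodule.mem_inf]
  constructor
  · rintro ⟨hΛ'', -⟩
    have : pr (O := O) hc l + y = l - (pr (O := O) hc.symm l - y) := by
      have hab := pr_add (O := O) hc l
      set a := pr (O := O) hc l
      set b := pr (O := O) hc.symm l
      rw [← hab]; abel
    rw [this]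
    exact Λ.sub_mem hl hΛ''
  · intro hmem
    refine ⟨?_, ?_⟩
    · show (pr (O := O) hc.symm l : V) - y ∈ Λ
      have : pr (O := O) hc.symm l - y = l - (pr (O := O) hc l + y) := by
        have hab := pr_add (O := O) hc l
        set a := pr (O := O) hc l
        set b := pr (O := O) hc.symm l
        rw [← hab]; abel
      rw [this]
      exact Λ.sub_mem hl hmem
    · show pr (O := O) hc.symm l - y ∈ V₂
      exact V₂.sub_mem (pr_mem (O := O) hc.symm l) hyV₂

theorem lp_le (x : V) (hx : x ∈ Lp hc Λ) : x ∈ V₁ := by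
  obtain ⟨l, _, rfl⟩ := hx; exact pr_mem (O := O) hc l

theorem phiL_inj : Function.Injective (phiL hc Λ) := by
  intro a b hab
  obtain ⟨za, rfl⟩ := Submodule.Quotient.mk_surjective _ a
  obtain ⟨zb, rfl⟩ := Submodule.Quotient.mk_surjective _ b
  rw [Submodule.Quotient.eq]
  have h0 : (0 : V) ∈ Lp hc.symm Λ := (Lp hc.symm Λ).zero_mem
  have hz : (↑(za - zb) : V) ∈ Lp hc Λ := (za - zb).2
  have hchar := (phiL_char hc Λ (↑(za - zb)) 0 hz h0).1
  have heq : phiL hc Λ (Submodule.Quotient.mk ⟨↑(za - zb), hz⟩) =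
      Submodule.Quotient.mk ⟨0, h0⟩ := by
    have e1 : (⟨↑(za - zb), hz⟩ : ↥(Lp hc Λ)) = za - zb := rfl
    have e2 : (⟨0, h0⟩ : ↥(Lp hc.symm Λ)) = 0 := rfl
    rw [e1, e2, Submodule.Quotient.mk_sub, map_sub, hab, sub_self,
      Submodule.Quotient.mk_zero]
  have hmem := hchar heq
  rw [add_zero] at hmem
  have hV₁ : ((za - zb : ↥(Lp hc Λ)) : V) ∈ V₁ := lp_le hc Λ _ (za - zb).2
  rw [Submodule.mem_comap, Submodule.subtype_apply, Submodule.mem_inf]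
  exact ⟨hmem, hV₁⟩

theorem phiL_surj : Function.Surjective (phiL hc Λ) := by
  intro w
  obtain ⟨z, rfl⟩ := Submodule.Quotient.mk_surjective _ w
  obtain ⟨l, hl, hz⟩ := z.2
  have hx : pr (O := O) hc l ∈ Lp hc Λ := ⟨l, hl, rfl⟩
  refine ⟨Submodule.Quotient.mk ⟨pr (O := O) hc l, hx⟩, ?_⟩
  have := (phiL_char hc Λ (pr (O := O) hc l) (↑z) hx z.2).2 (by
    rw [show (↑z : V) = pr (O := O) hc.symm l from hz.symm, pr_add]; exact hl)
  simpa using this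

noncomputable def phiE : Q1 hc Λ ≃ₗ[O] Q1 hc.symm Λ :=
  LinearEquiv.ofBijective (phiL hc Λ) ⟨phiL_inj hc Λ, phiL_surj hc Λ⟩

theorem phiE_char (x y : V) (hx : x ∈ Lp hc Λ) (hy : y ∈ Lp hc.symm Λ) :
    phiE hc Λ (Submodule.Quotient.mk ⟨x, hx⟩) = Submodule.Quotient.mk ⟨y, hy⟩ ↔
      x + y ∈ Λ := phiL_char hc Λ x y hx hy

end Phi

section Main

variable {V₁ V₂ : Submodule F V} (hc : IsCompl V₁ V₂)

/-- The forward map: a lattice gives a tuple. -/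
noncomputable def fwd (Λ : Submodule O V) (hΛ : IsLatticeOf O (⊤ : Submodule F V) Λ) :
    LatTuple O V₁ V₂ where
  L1m := Λ ⊓ V₁.restrictScalars O
  L1p := Lp hc Λ
  L2m := Λ ⊓ V₂.restrictScalars O
  L2p := Lp hc.symm Λ
  h1m := ⟨fg_of_le hΛ.1 inf_le_left, inf_le_right, span_inf Λ V₁ hΛ.2.2⟩
  h1p := by
    refine ⟨hΛ.1.map _, ?_, ?_⟩
    · rintro x ⟨l, -, rfl⟩; exact pr_mem (O := O) hc l
    · refine le_antisymm (Submodule.span_le.2 fun x hx => lp_le hc Λ x hx) ?_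
      have h := Submodule.span_mono (R := F)
        (show ((Λ ⊓ V₁.restrictScalars O : Submodule O V) : Set V) ⊆ (Lp hc Λ : Set V)
          from fun x hx => ⟨x, hx.1, pr_left (O := O) hc hx.2⟩)
      rwa [span_inf Λ V₁ hΛ.2.2] at h
  h2m := ⟨fg_of_le hΛ.1 inf_le_left, inf_le_right, span_inf Λ V₂ hΛ.2.2⟩
  h2p := by
    refine ⟨hΛ.1.map _, ?_, ?_⟩
    · rintro x ⟨l, -, rfl⟩; exact pr_mem (O := O) hc.symm l
    · refine le_antisymm (Submodule.span_le.2 fun x hx => lp_le hc.symm Λ x hx) ?_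
      have h := Submodule.span_mono (R := F)
        (show ((Λ ⊓ V₂.restrictScalars O : Submodule O V) : Set V) ⊆ (Lp hc.symm Λ : Set V)
          from fun x hx => ⟨x, hx.1, pr_left (O := O) hc.symm hx.2⟩)
      rwa [span_inf Λ V₂ hΛ.2.2] at h
  hle1 := fun x hx => ⟨x, hx.1, pr_left (O := O) hc hx.2⟩
  hle2 := fun x hx => ⟨x, hx.1, pr_left (O := O) hc.symm hx.2⟩
  phi := phiE hc Λ

/-- The backward map on submodules. -/
def bwdSub (t : LatTuple O V₁ V₂) : Submodule O V where
  carrier := {v | ∃ (x : t.L1p) (y : t.L2p), v = (x : V) + (y : V) ∧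
    t.phi (Submodule.Quotient.mk x) = Submodule.Quotient.mk y}
  add_mem' := by
    rintro a b ⟨xa, ya, rfl, ha⟩ ⟨xb, yb, rfl, hb⟩
    refine ⟨xa + xb, ya + yb, by push_cast; abel, ?_⟩
    rw [Submodule.Quotient.mk_add, Submodule.Quotient.mk_add, map_add, ha, hb]
  zero_mem' := ⟨0, 0, by simp, by simp⟩
  smul_mem' := by
    rintro c v ⟨x, y, rfl, h⟩
    refine ⟨c • x, c • y, by push_cast [smul_add]; rfl, ?_⟩
    rw [Submodule.Quotient.mk_smul, Submodule.Quotient.mk_smul, map_smul, h]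

theorem mem_bwdSub {t : LatTuple O V₁ V₂} {v : V} :
    v ∈ bwdSub t ↔ ∃ (x : t.L1p) (y : t.L2p), v = (x : V) + (y : V) ∧
      t.phi (Submodule.Quotient.mk x) = Submodule.Quotient.mk y := Iff.rfl

theorem m1_le (t : LatTuple O V₁ V₂) : t.L1m ≤ bwdSub t := by
  intro u hu
  refine ⟨⟨u, t.hle1 hu⟩, 0, by simp, ?_⟩
  have hmem : (⟨u, t.hle1 hu⟩ : ↥t.L1p) ∈ Submodule.comap t.L1p.subtype t.L1m := hu
  rw [(Submodule.Quotient.mk_eq_zero _).2 hmem, map_zero, Submodule.Quotient.mk_zero]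

theorem m2_le (t : LatTuple O V₁ V₂) : t.L2m ≤ bwdSub t := by
  intro u hu
  refine ⟨0, ⟨u, t.hle2 hu⟩, by simp, ?_⟩
  have hmem : (⟨u, t.hle2 hu⟩ : ↥t.L2p) ∈ Submodule.comap t.L2p.subtype t.L2m := hu
  rw [(Submodule.Quotient.mk_eq_zero _).2 hmem, Submodule.Quotient.mk_zero, map_zero]

include hc in
theorem bwd_lattice (t : LatTuple O V₁ V₂) : IsLatticeOf O (⊤ : Submodule F V) (bwdSub t) := by
  refine ⟨?_, ?_, ?_⟩
  · refine fg_of_le (t.h1p.1.sup t.h2p.1) ?_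
    rintro v ⟨x, y, rfl, -⟩
    exact Submodule.add_mem_sup x.2 y.2
  · intro x _; trivial
  · rw [eq_top_iff, ← codisjoint_iff.1 hc.codisjoint]
    refine sup_le ?_ ?_
    · have h := Submodule.span_mono (R := F)
        (show (t.L1m : Set V) ⊆ (bwdSub t : Set V) from m1_le t)
      rwa [t.h1m.2.2] at h
    · have h := Submodule.span_mono (R := F)
        (show (t.L2m : Set V) ⊆ (bwdSub t : Set V) from m2_le t)
      rwa [t.h2m.2.2] at h

theorem latTuple_ext {t t' : LatTuple O V₁ V₂} (e1 : t.L1m = t'.L1m) (e2 : t.L1p = t'.L1p)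
    (e3 : t.L2m = t'.L2m) (e4 : t.L2p = t'.L2p)
    (ephi : ∀ (x y : V) (hx : x ∈ t.L1p) (hy : y ∈ t.L2p) (hx' : x ∈ t'.L1p)
      (hy' : y ∈ t'.L2p),
      (t.phi (Submodule.Quotient.mk ⟨x, hx⟩) = Submodule.Quotient.mk ⟨y, hy⟩ ↔
       t'.phi (Submodule.Quotient.mk ⟨x, hx'⟩) = Submodule.Quotient.mk ⟨y, hy'⟩)) :
    t = t' := by
  obtain ⟨L1m, L1p, L2m, L2p, h1m, h1p, h2m, h2p, hle1, hle2, phi⟩ := t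
  obtain ⟨L1m', L1p', L2m', L2p', h1m', h1p', h2m', h2p', hle1', hle2', phi'⟩ := t'
  dsimp only at e1 e2 e3 e4 ephi
  subst e1; subst e2; subst e3; subst e4
  simp only [LatTuple.mk.injEq, heq_eq_eq, and_true, true_and, eq_self_iff_true]
  refine LinearEquiv.toLinearMap_injective (Submodule.linearMap_qext _ ?_)
  ext z
  obtain ⟨w, hw⟩ := Submodule.Quotient.mk_surjective _ (phi (Submodule.Quotient.mk z))
  have h1 : phi' (Submodule.Quotient.mk z) = Submodule.Quotient.mk w :=
    (ephi (↑z) (↑w) z.2 w.2 z.2 w.2).1 hw.symm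
  show phi (Submodule.Quotient.mk z) = phi' (Submodule.Quotient.mk z)
  rw [h1, ← hw]

include hc in
theorem bwd_inf1 (t : LatTuple O V₁ V₂) :
    bwdSub t ⊓ V₁.restrictScalars O = t.L1m := by
  ext u
  constructor
  · rintro ⟨⟨x, y, hvxy, h⟩, huV₁⟩
    have hxV : (x : V) ∈ V₁ := t.h1p.2.1 x.2
    have hyV : (y : V) ∈ V₂ := t.h2p.2.1 y.2
    have hy0 : (y : V) = 0 := by
      have hyV₁ : (y : V) ∈ V₁ := by
        have : (y : V) = u - x := by rw [hvxy]; abel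
        rw [this]; exact V₁.sub_mem huV₁ hxV
      exact Submodule.disjoint_def.1 hc.disjoint _ hyV₁ hyV
    have hy0' : y = 0 := Subtype.ext hy0
    rw [hy0'] at h
    have hmk : Submodule.Quotient.mk x
        = (0 : ↥t.L1p ⧸ Submodule.comap t.L1p.subtype t.L1m) := by
      apply t.phi.injective
      rw [map_zero, h, Submodule.Quotient.mk_zero]
    have hx1 : x ∈ Submodule.comap t.L1p.subtype t.L1m :=
      (Submodule.Quotient.mk_eq_zero _).1 hmk
    rw [hvxy, hy0, add_zero]
    exact hx1
  · intro hu
    exact ⟨m1_le t hu, t.h1m.2.1 hu⟩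

include hc in
theorem bwd_inf2 (t : LatTuple O V₁ V₂) :
    bwdSub t ⊓ V₂.restrictScalars O = t.L2m := by
  ext u
  constructor
  · rintro ⟨⟨x, y, hvxy, h⟩, huV₂⟩
    have hxV : (x : V) ∈ V₁ := t.h1p.2.1 x.2
    have hyV : (y : V) ∈ V₂ := t.h2p.2.1 y.2
    have hx0 : (x : V) = 0 := by
      have hxV₂ : (x : V) ∈ V₂ := by
        have : (x : V) = u - y := by rw [hvxy]; abel
        rw [this]; exact V₂.sub_mem huV₂ hyV
      exact Submodule.disjoint_def.1 hc.disjoint _ hxV hxV₂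
    have hx0' : x = 0 := Subtype.ext hx0
    rw [hx0', Submodule.Quotient.mk_zero, map_zero] at h
    have hy1 : y ∈ Submodule.comap t.L2p.subtype t.L2m :=
      (Submodule.Quotient.mk_eq_zero _).1 h.symm
    rw [hvxy, hx0, zero_add]
    exact hy1
  · intro hu
    exact ⟨m2_le t hu, t.h2m.2.1 hu⟩

theorem bwd_map1 (t : LatTuple O V₁ V₂) : Lp hc (bwdSub t) = t.L1p := by
  ext u
  constructor
  · rintro ⟨v, ⟨x, y, rfl, h⟩, rfl⟩
    have : pr (O := O) hc ((x : V) + y) = (x : V) := by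
      rw [map_add, pr_left (O := O) hc (t.h1p.2.1 x.2),
        pr_right (O := O) hc (t.h2p.2.1 y.2), add_zero]
    rw [this]; exact x.2
  · intro hu
    obtain ⟨y, hy⟩ := Submodule.Quotient.mk_surjective _
      (t.phi (Submodule.Quotient.mk (⟨u, hu⟩ : ↥t.L1p)))
    refine ⟨u + y, ⟨⟨u, hu⟩, y, rfl, hy.symm⟩, ?_⟩
    rw [map_add, pr_left (O := O) hc (t.h1p.2.1 hu),
      pr_right (O := O) hc (t.h2p.2.1 y.2), add_zero]

theorem bwd_map2 (t : LatTuple O V₁ V₂) : Lp hc.symm (bwdSub t) = t.L2p := by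
  ext u
  constructor
  · rintro ⟨v, ⟨x, y, rfl, h⟩, rfl⟩
    have : pr (O := O) hc.symm ((x : V) + y) = (y : V) := by
      rw [map_add, pr_right (O := O) hc.symm (t.h1p.2.1 x.2),
        pr_left (O := O) hc.symm (t.h2p.2.1 y.2), zero_add]
    rw [this]; exact y.2
  · intro hu
    obtain ⟨z, hz⟩ := t.phi.surjective (Submodule.Quotient.mk (⟨u, hu⟩ : ↥t.L2p))
    obtain ⟨x, hx⟩ := Submodule.Quotient.mk_surjective _ z
    refine ⟨(x : V) + u, ⟨x, ⟨u, hu⟩, rfl, by rw [hx, hz]⟩, ?_⟩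
    rw [map_add, pr_right (O := O) hc.symm (t.h1p.2.1 x.2),
      pr_left (O := O) hc.symm (t.h2p.2.1 hu), zero_add]

include hc in
theorem bwd_phi {t : LatTuple O V₁ V₂} {x y : V} (hx : x ∈ t.L1p) (hy : y ∈ t.L2p) :
    x + y ∈ bwdSub t ↔
      t.phi (Submodule.Quotient.mk ⟨x, hx⟩) = Submodule.Quotient.mk ⟨y, hy⟩ := by
  constructor
  · rintro ⟨a, b, hab, h⟩
    have h1 : x - (a : V) = (b : V) - y :=
      sub_eq_sub_iff_add_eq_add.2 (by rw [hab]; exact add_comm _ _)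
    have hV₁ : x - (a : V) ∈ V₁ := V₁.sub_mem (t.h1p.2.1 hx) (t.h1p.2.1 a.2)
    have hV₂ : x - (a : V) ∈ V₂ := by
      rw [h1]; exact V₂.sub_mem (t.h2p.2.1 b.2) (t.h2p.2.1 hy)
    have hx0 : x - (a : V) = 0 := Submodule.disjoint_def.1 hc.disjoint _ hV₁ hV₂
    have hxa : x = (a : V) := by rwa [sub_eq_zero] at hx0
    have hyb : y = (b : V) := by
      have := hab; rw [hxa] at this
      exact add_left_cancel this
    have ea : (⟨x, hx⟩ : ↥t.L1p) = a := Subtype.ext hxa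
    have eb : (⟨y, hy⟩ : ↥t.L2p) = b := Subtype.ext hyb
    rw [ea, eb]; exact h
  · intro h
    exact ⟨⟨x, hx⟩, ⟨y, hy⟩, rfl, h⟩

end Main

end Stmt15Aux

/-- Let `O` be a DVR with fraction field `F` and `V` a finite-dimensional `F`-vector
space with `V = V₁ ⊕ V₂`.  The map `Λ ↦ (Λ ∩ V₁, pr₁(Λ), Λ ∩ V₂, pr₂(Λ), φ_Λ)`, where
`φ_Λ` is characterized by `φ_Λ(x + (Λ∩V₁)) = y + (Λ∩V₂) ↔ x + y ∈ Λ`, is a bijection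
from the set of `O`-lattices of `V` to the set of tuples `(L₁⁻, L₁⁺, L₂⁻, L₂⁺, φ)` as
in `LatTuple`. -/
theorem stmt15 (O : Type*) {F V : Type*} [CommRing O] [IsDomain O]
    [IsDiscreteValuationRing O] [Field F] [Algebra O F] [IsFractionRing O F]
    [AddCommGroup V] [Module F V] [Module O V] [IsScalarTower O F V]
    [FiniteDimensional F V]
    (V₁ V₂ : Submodule F V) (hc : IsCompl V₁ V₂) :
    ∃ e : {Λ : Submodule O V // IsLatticeOf O (⊤ : Submodule F V) Λ} ≃ LatTuple O V₁ V₂,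
      ∀ Λ : {Λ : Submodule O V // IsLatticeOf O (⊤ : Submodule F V) Λ},
        (e Λ).L1m = Λ.1 ⊓ V₁.restrictScalars O ∧
        (e Λ).L2m = Λ.1 ⊓ V₂.restrictScalars O ∧
        (e Λ).L1p = Submodule.map
          ((V₁.subtype ∘ₗ V₁.linearProjOfIsCompl V₂ hc).restrictScalars O) Λ.1 ∧
        (e Λ).L2p = Submodule.map
          ((V₂.subtype ∘ₗ V₂.linearProjOfIsCompl V₁ hc.symm).restrictScalars O) Λ.1 ∧
        ∀ (x y : V) (hx : x ∈ (e Λ).L1p) (hy : y ∈ (e Λ).L2p),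
          ((e Λ).phi (Submodule.Quotient.mk ⟨x, hx⟩) = Submodule.Quotient.mk ⟨y, hy⟩ ↔
            x + y ∈ Λ.1) := by
  classical
  refine ⟨{
    toFun := fun Λ => Stmt15Aux.fwd hc Λ.1 Λ.2
    invFun := fun t => ⟨Stmt15Aux.bwdSub t, Stmt15Aux.bwd_lattice hc t⟩
    left_inv := ?_
    right_inv := ?_ }, ?_⟩
  · intro Λ
    apply Subtype.ext
    ext v
    constructor
    · rintro ⟨x, y, rfl, h⟩
      exact (Stmt15Aux.phiE_char hc Λ.1 (↑x) (↑y) x.2 y.2).1 h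
    · intro hv
      refine ⟨⟨Stmt15Aux.pr (O := O) hc v, ⟨v, hv, rfl⟩⟩,
        ⟨Stmt15Aux.pr (O := O) hc.symm v, ⟨v, hv, rfl⟩⟩,
        (Stmt15Aux.pr_add (O := O) hc v).symm, ?_⟩
      exact (Stmt15Aux.phiE_char hc Λ.1 _ _ ⟨v, hv, rfl⟩ ⟨v, hv, rfl⟩).2
        (by rw [Stmt15Aux.pr_add (O := O) hc v]; exact hv)
  · intro t
    refine Stmt15Aux.latTuple_ext (Stmt15Aux.bwd_inf1 hc t) (Stmt15Aux.bwd_map1 hc t)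
      (Stmt15Aux.bwd_inf2 hc t) (Stmt15Aux.bwd_map2 hc t) ?_
    intro x y hx hy hx' hy'
    exact Iff.trans (Stmt15Aux.phiE_char hc (Stmt15Aux.bwdSub t) x y hx hy)
      (Stmt15Aux.bwd_phi hc hx' hy')
  · intro Λ
    exact ⟨rfl, rfl, rfl, rfl, fun x y hx hy => Stmt15Aux.phiE_char hc Λ.1 x y hx hy⟩
end
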